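/- Let X be a random variable on (0,1) with density 2x with respect to Lebesgue measure (i.e., the normalized density e^{-V(x)} for the 1-exp-concave potential V(x) = −log x on (0,1)). Then for every λ > 0, E[ exp( λ (V(X) − E V(X))² ) ] = ∞; that is, the information content admits no sub-Gaussian moment generating function bound. -/

import Mathlib

/-!
Near `0` the density `2x` is beaten by the integrand: with `t = -log x → ∞` one has
`2x · exp(λ (t - m)²) ≥ exp(λ (t - m)² - t) ≥ exp t = x⁻¹` as soon as `λ (t - m)² ≥ 2t`,
which holds for all large `t` whatever the centring constant `m = E V(X)` is. Since `x⁻¹` is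
not integrable at `0`, the integral diverges.
-/

open MeasureTheory Real Filter Topology Set

lemma setLIntegral_Ioo_zero_ofReal_inv_eq_top {b : ℝ} (hb : 0 < b) :
    ∫⁻ x in Ioo 0 b, ENNReal.ofReal x⁻¹ = ⊤ := by
  by_contra h
  have hint : IntegrableOn (fun x : ℝ ↦ x ^ (-1 : ℝ)) (Ioo 0 b) := by
    simp_rw [rpow_neg_one]
    refine (lintegral_ofReal_ne_top_iff_integrable measurable_inv.aestronglyMeasurable ?_).1 h
    filter_upwards [ae_restrict_mem measurableSet_Ioo] with x hx
    exact inv_nonneg.2 hx.1.le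
  exact lt_irrefl _ ((intervalIntegral.integrableOn_Ioo_rpow_iff hb).1 hint)

lemma setLIntegral_Ioo_zero_eq_top_of_eventually_inv_le {b : ℝ} (hb : 0 < b)
    {f : ℝ → ENNReal} (hf : ∀ᶠ x in 𝓝[>] 0, ENNReal.ofReal x⁻¹ ≤ f x) :
    ∫⁻ x in Ioo 0 b, f x = ⊤ := by
  obtain ⟨u, hu, hsub⟩ := mem_nhdsGT_iff_exists_Ioo_subset.1 hf
  have hδ : 0 < min u b := lt_min hu hb
  refine top_le_iff.1 ?_
  calc ⊤ = ∫⁻ x in Ioo 0 (min u b), ENNReal.ofReal x⁻¹ :=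
        (setLIntegral_Ioo_zero_ofReal_inv_eq_top hδ).symm
    _ ≤ ∫⁻ x in Ioo 0 (min u b), f x :=
        setLIntegral_mono' measurableSet_Ioo fun x hx ↦
          hsub (Ioo_subset_Ioo_right (min_le_left u b) hx)
    _ ≤ ∫⁻ x in Ioo 0 b, f x := lintegral_mono_set (Ioo_subset_Ioo_right (min_le_right u b))

lemma eventually_mul_le_mul_sub_sq (a : ℝ) {c : ℝ} (hc : 0 < c) (m : ℝ) :
    ∀ᶠ t in atTop, a * t ≤ c * (t - m) ^ 2 := by
  filter_upwards [eventually_ge_atTop (2 * |m|), eventually_ge_atTop (4 * |a| / c)]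
    with t hm ha
  have hhalf : t / 2 ≤ t - m := by linarith [le_abs_self m]
  have hca : 4 * |a| ≤ c * t := by rw [div_le_iff₀ hc] at ha; linarith
  have ht : 0 ≤ t := le_trans (by positivity) hm
  calc a * t ≤ |a| * t := mul_le_mul_of_nonneg_right (le_abs_self a) ht
    _ ≤ c * (t / 2) ^ 2 := by nlinarith
    _ ≤ c * (t - m) ^ 2 := by gcongr

lemma eventually_inv_le_two_mul_mul_exp {lam : ℝ} (hlam : 0 < lam) (m : ℝ) :
    ∀ᶠ x in 𝓝[>] 0, x⁻¹ ≤ 2 * x * exp (lam * (-log x - m) ^ 2) := by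
  have hneglog : Tendsto (fun x ↦ -log x) (𝓝[>] 0) atTop :=
    tendsto_neg_atBot_atTop.comp tendsto_log_nhdsGT_zero
  filter_upwards [hneglog.eventually (eventually_mul_le_mul_sub_sq 2 hlam m),
    self_mem_nhdsWithin] with x hquad (hx : 0 < x)
  have hx_exp : x = exp (log x) := (exp_log hx).symm
  calc x⁻¹ = exp (-log x) := by rw [exp_neg, ← hx_exp]
    _ ≤ exp (log x + lam * (-log x - m) ^ 2) := exp_le_exp.2 (by linarith)
    _ = x * exp (lam * (-log x - m) ^ 2) := by rw [exp_add, ← hx_exp]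
    _ ≤ 2 * x * exp (lam * (-log x - m) ^ 2) := by
        have := exp_pos (lam * (-log x - m) ^ 2)
        nlinarith

/-- For the distribution on `(0,1)` with density `2x` (the log-concave
measure of the `1`-exp-concave potential `V(x) = -log x`), the information content has no
sub-Gaussian moment generating function: `E exp(λ (V - E V)²) = ∞` for every `λ > 0`. -/
theorem no_subgaussian_information_concentration
    (μ : Measure ℝ)
    (hμ : μ = (volume.restrict (Set.Ioo (0 : ℝ) 1)).withDensity fun x =>
      ENNReal.ofReal (2 * x))
    (V : ℝ → ℝ) (hV : ∀ x, V x = -Real.log x)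
    (lam : ℝ) (hlam : 0 < lam) :
    ∫⁻ x, ENNReal.ofReal (Real.exp (lam * (V x - ∫ y, V y ∂μ) ^ 2)) ∂μ = ⊤ := by
  generalize ∫ y, V y ∂μ = m
  subst hμ
  rw [lintegral_withDensity_eq_lintegral_mul_non_measurable _ (by fun_prop)
    (ae_of_all _ fun _ ↦ ENNReal.ofReal_lt_top)]
  refine setLIntegral_Ioo_zero_eq_top_of_eventually_inv_le one_pos ?_
  filter_upwards [eventually_inv_le_two_mul_mul_exp hlam m] with x hx
  rw [Pi.mul_apply, ← ENNReal.ofReal_mul' (exp_pos _).le, hV]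
  exact ENNReal.ofReal_le_ofReal hx
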